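/- Let Θ ⊆ I be special, J ⊆ I, and σ ∈ ^{Θ∪Θ⊥}W^J (a minimal length double coset representative of W_{Θ∪Θ⊥}\W/W_J). Then R(Θ) ∩ σF̄_J = F̄_{Θ∪J∪red(σ)}. -/

import Mathlib

open scoped Pointwise

/-- A realization over `ℝ` of a generalized Cartan matrix `A = (a_{ij})_{i,j ∈ I}`.
The space `E` plays the role of `h_ℝ*`; `coroot i` is the linear functional
`λ ↦ λ(h_i)` of evaluation against the simple coroot `h_i`, and `root i` is the
simple root `α_i ∈ h_ℝ*`. -/
structure GCMRealization where
  I : Type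
  E : Type
  [fintypeI : Fintype I]
  [decEqI : DecidableEq I]
  [addCommGroupE : AddCommGroup E]
  [moduleE : Module ℝ E]
  [finiteDimensionalE : FiniteDimensional ℝ E]
  A : I → I → ℤ
  diag : ∀ i, A i i = 2
  offDiag_nonpos : ∀ i j, i ≠ j → A i j ≤ 0
  zero_iff : ∀ i j, A i j = 0 ↔ A j i = 0
  root : I → E
  coroot : I → E →ₗ[ℝ] ℝ
  root_indep : LinearIndependent ℝ root
  coroot_indep : LinearIndependent ℝ coroot
  pairing : ∀ i j, coroot i (root j) = (A i j : ℝ)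

attribute [instance] GCMRealization.fintypeI GCMRealization.decEqI
  GCMRealization.addCommGroupE GCMRealization.moduleE GCMRealization.finiteDimensionalE

namespace GCMRealization

variable (S : GCMRealization)

/-- The group of linear automorphisms of `E`, realized as units of the
endomorphism monoid. -/
abbrev U := (S.E →ₗ[ℝ] S.E)ˣ

/-- Application of a linear automorphism to a vector. -/
def ap (σ : S.U) (x : S.E) : S.E := σ.val x

/-- The simple reflection `σ_i : λ ↦ λ - λ(h_i) α_i` as a linear endomorphism. -/
def sMap (i : S.I) : S.E →ₗ[ℝ] S.E := LinearMap.id - (S.coroot i).smulRight (S.root i)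

lemma sMap_apply (i : S.I) (x : S.E) : S.sMap i x = x - S.coroot i x • S.root i := rfl

lemma sMap_sq (i : S.I) : S.sMap i * S.sMap i = 1 := by
  have h2 : S.coroot i (S.root i) = 2 := by
    rw [S.pairing, S.diag]; norm_num
  ext x
  rw [Module.End.mul_apply, Module.End.one_apply, sMap_apply, sMap_apply, map_sub, map_smul, h2,
    smul_eq_mul]
  have h3 : S.coroot i x - S.coroot i x * 2 = -(S.coroot i x) := by ring
  rw [h3, neg_smul, sub_neg_eq_add]
  abel

/-- The simple reflection `σ_i` as a linear automorphism. -/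
def sUnit (i : S.I) : S.U := ⟨S.sMap i, S.sMap i, S.sMap_sq i, S.sMap_sq i⟩

/-- The Weyl group `W`, generated by the simple reflections. -/
def W : Subgroup S.U := Subgroup.closure (Set.range S.sUnit)

/-- The standard parabolic subgroup `W_J`, generated by `{σ_i : i ∈ J}`. -/
def WJ (J : Set S.I) : Subgroup S.U := Subgroup.closure (S.sUnit '' J)

lemma WJ_le_W (J : Set S.I) : S.WJ J ≤ S.W :=
  Subgroup.closure_mono (Set.image_subset_range _ _)

lemma ap_mul (σ τ : S.U) (x : S.E) : S.ap (σ * τ) x = S.ap σ (S.ap τ x) := rfl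

lemma ap_one (x : S.E) : S.ap 1 x = x := rfl

/-- The closed fundamental chamber `C̄`. -/
def chamber : Set S.E := { x | ∀ i, 0 ≤ S.coroot i x }

/-- The Tits cone `X = W ⬝ C̄`. -/
def titsCone : Set S.E := { x | ∃ σ ∈ S.W, ∃ y ∈ S.chamber, x = S.ap σ y }

/-- The open facet `F_J` of type `J`. -/
def openFacet (J : Set S.I) : Set S.E :=
  { x | (∀ i ∈ J, S.coroot i x = 0) ∧ ∀ i, i ∉ J → 0 < S.coroot i x }

/-- The closed facet `F̄_J` of type `J`. -/
def closedFacet (J : Set S.I) : Set S.E :=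
  { x | (∀ i ∈ J, S.coroot i x = 0) ∧ ∀ i, i ∉ J → 0 ≤ S.coroot i x }

/-- A face of the Tits cone, in the sense of convex geometry: an extreme convex
subcone of the convex cone `X`. -/
def IsFace (F : Set S.E) : Prop :=
  Convex ℝ F ∧ (∀ c : ℝ, 0 ≤ c → ∀ x ∈ F, c • x ∈ F) ∧ IsExtreme ℝ S.titsCone F

/-- The set `Fa(X)` of faces of the Tits cone. -/
def faces : Set (Set S.E) := { F | S.IsFace F }

lemma faces_subset {F : Set S.E} (h : F ∈ S.faces) : F ⊆ S.titsCone := h.2.2.1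

/-- Two indices of `Θ` are linked if they are joined by an edge of the Coxeter
diagram of the submatrix `A_Θ`. -/
def connRel (Θ : Set S.I) (i j : S.I) : Prop := i ∈ Θ ∧ j ∈ Θ ∧ S.A i j ≠ 0

/-- The index set of the connected component of `i` in the submatrix `A_Θ`. -/
def component (Θ : Set S.I) (i : S.I) : Set S.I :=
  { j | j ∈ Θ ∧ Relation.ReflTransGen (S.connRel Θ) i j }

/-- A subset `K ⊆ I` is of finite type iff its Weyl group `W_K` is finite. -/
def finType (K : Set S.I) : Prop := Finite (S.WJ K)

/-- `Θ^∞`: the union of the index sets of the connected components of `A_Θ` of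
non-finite type. -/
def infpart (Θ : Set S.I) : Set S.I := { i | i ∈ Θ ∧ ¬ S.finType (S.component Θ i) }

/-- `Θ⁰`: the union of the index sets of the connected components of `A_Θ` of
finite type. -/
def finpart (Θ : Set S.I) : Set S.I := { i | i ∈ Θ ∧ S.finType (S.component Θ i) }

/-- `Θ` is special if `Θ = Θ^∞`. -/
def special (Θ : Set S.I) : Prop := S.infpart Θ = Θ

/-- `J⊥ = { i ∈ I : a_{ij} = 0 for all j ∈ J }`. -/
def perp (J : Set S.I) : Set S.I := { i | ∀ j ∈ J, S.A i j = 0 }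

/-- The special face `R(Θ) = W_{Θ⊥} ⬝ F̄_Θ` of the Tits cone. -/
def faceR (Θ : Set S.I) : Set S.E :=
  { x | ∃ σ ∈ S.WJ (S.perp Θ), ∃ y ∈ S.closedFacet Θ, x = S.ap σ y }

lemma closedFacet_subset_chamber (J : Set S.I) : S.closedFacet J ⊆ S.chamber := by
  intro x hx i
  by_cases hi : i ∈ J
  · exact le_of_eq (hx.1 i hi).symm
  · exact hx.2 i hi

lemma chamber_subset_titsCone : S.chamber ⊆ S.titsCone :=
  fun x hx => ⟨1, one_mem _, x, hx, rfl⟩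

lemma ap_mem_titsCone {σ : S.U} (hσ : σ ∈ S.W) {x : S.E} (hx : x ∈ S.titsCone) :
    S.ap σ x ∈ S.titsCone := by
  obtain ⟨τ, hτ, y, hy, rfl⟩ := hx
  exact ⟨σ * τ, mul_mem hσ hτ, y, hy, rfl⟩

lemma faceR_subset (Θ : Set S.I) : S.faceR Θ ⊆ S.titsCone := by
  rintro x ⟨σ, hσ, y, hy, rfl⟩
  exact S.ap_mem_titsCone (S.WJ_le_W _ hσ)
    (S.chamber_subset_titsCone (S.closedFacet_subset_chamber Θ hy))

/-- The product of the word `l` in the simple reflections. -/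
def wordProd (l : List S.I) : S.U := (l.map S.sUnit).prod

/-- The length of an element of the Weyl group: the length of a shortest
expression as a product of simple reflections. -/
noncomputable def length (σ : S.U) : ℕ :=
  sInf { n | ∃ l : List S.I, l.length = n ∧ S.wordProd l = σ }

/-- `l` is a reduced expression of `σ`. -/
def IsReduced (l : List S.I) (σ : S.U) : Prop :=
  S.wordProd l = σ ∧ l.length = S.length σ

/-- `red σ`: the set of indices of simple reflections occurring in a reduced
expression of `σ` (by a result of J. Tits this set does not depend on the
choice of reduced expression). -/
def red (σ : S.U) : Set S.I := { i | ∃ l : List S.I, S.IsReduced l σ ∧ i ∈ l }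

/-- `W^J`: the minimal length representatives of the cosets `W/W_J`. -/
def minRight (J : Set S.I) : Set S.U :=
  { σ | σ ∈ S.W ∧ ∀ τ ∈ S.WJ J, S.length σ ≤ S.length (σ * τ) }

/-- `^K W`: the minimal length representatives of the cosets `W_K\W`. -/
def minLeft (K : Set S.I) : Set S.U :=
  { σ | σ ∈ S.W ∧ ∀ κ ∈ S.WJ K, S.length σ ≤ S.length (κ * σ) }

/-- `^K W^J`: the minimal length representatives of the double cosets
`W_K\W/W_J`. -/
def minDouble (K J : Set S.I) : Set S.U :=
  { σ | σ ∈ S.W ∧ ∀ κ ∈ S.WJ K, ∀ τ ∈ S.WJ J, S.length σ ≤ S.length (κ * σ * τ) }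

/-- `(W_L)^{J'}`: the minimal length representatives within `W_L` of the cosets
`W_L/W_{J'}`. -/
def minRightIn (L J' : Set S.I) : Set S.U :=
  { σ | σ ∈ S.WJ L ∧ ∀ τ ∈ S.WJ J', S.length σ ≤ S.length (σ * τ) }

/-- Pairs `(σ, R)` with `σ ∈ W` and `R ⊆ X`, the raw material for the face
monoid: `(σ, R)` represents the element `σ ε(R)`. -/
structure PreHat (S : GCMRealization) where
  w : S.W
  carrier : Set S.E
  subX : carrier ⊆ S.titsCone

lemma PreHat.ext' : ∀ {p q : S.PreHat}, p.w = q.w → p.carrier = q.carrier → p = q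
  | ⟨_, _, _⟩, ⟨_, _, _⟩, h1, h2 => by cases h1; cases h2; rfl

instance : One S.PreHat := ⟨⟨1, S.titsCone, subset_rfl⟩⟩

/-- The semidirect product multiplication `(σ, R)(τ, T) = (στ, τ⁻¹R ∩ T)`. -/
instance : Mul S.PreHat :=
  ⟨fun p q => ⟨p.w * q.w, S.ap ↑q.w ⁻¹' p.carrier ∩ q.carrier,
    fun _ hx => q.subX hx.2⟩⟩

lemma PreHat.mul_w (p q : S.PreHat) : (p * q).w = p.w * q.w := rfl

lemma PreHat.mul_carrier (p q : S.PreHat) :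
    (p * q).carrier = S.ap ↑q.w ⁻¹' p.carrier ∩ q.carrier := rfl

lemma PreHat.one_w : (1 : S.PreHat).w = 1 := rfl

lemma PreHat.one_carrier : (1 : S.PreHat).carrier = S.titsCone := rfl

instance : Monoid S.PreHat where
  mul_assoc p q r := by
    refine PreHat.ext' S (mul_assoc _ _ _) ?_
    ext x
    simp only [PreHat.mul_carrier, PreHat.mul_w, Set.mem_inter_iff, Set.mem_preimage,
      Subgroup.coe_mul, S.ap_mul]
    tauto
  one_mul p := by
    refine PreHat.ext' S (one_mul _) ?_
    ext x
    simp only [PreHat.mul_carrier, PreHat.one_carrier, Set.mem_inter_iff, Set.mem_preimage]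
    exact ⟨fun h => h.2, fun h => ⟨S.ap_mem_titsCone p.w.2 (p.subX h), h⟩⟩
  mul_one p := by
    refine PreHat.ext' S (mul_one _) ?_
    ext x
    simp only [PreHat.mul_carrier, PreHat.one_carrier, Set.mem_inter_iff, Set.mem_preimage,
      OneMemClass.coe_one, S.ap_one]
    exact ⟨fun h => h.1, fun h => ⟨h, p.subX h⟩⟩

/-- The congruence relation `σ ε(R) = σ' ε(R') ⟺ R = R'` and `σ⁻¹σ'` fixes `R`
pointwise. -/
def hatCon : Con S.PreHat where
  r p q := p.carrier = q.carrier ∧ ∀ x ∈ p.carrier, S.ap ↑p.w x = S.ap ↑q.w x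
  iseqv :=
    { refl := fun p => ⟨rfl, fun _ _ => rfl⟩
      symm := fun {p q} h => ⟨h.1.symm, fun x hx => (h.2 x (h.1 ▸ hx)).symm⟩
      trans := fun {p q r} h h' =>
        ⟨h.1.trans h'.1, fun x hx => (h.2 x hx).trans (h'.2 x (h.1 ▸ hx))⟩ }
  mul' := by
    rintro p p' q q' ⟨hc, hw⟩ ⟨hc', hw'⟩
    constructor
    · ext x
      simp only [PreHat.mul_carrier, Set.mem_inter_iff, Set.mem_preimage]
      constructor
      · rintro ⟨h1, h2⟩
        exact ⟨by rw [← hw' x h2, ← hc]; exact h1, hc' ▸ h2⟩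
      · rintro ⟨h1, h2⟩
        have h2' : x ∈ q.carrier := hc' ▸ h2
        exact ⟨by rw [hc, hw' x h2']; exact h1, h2'⟩
    · rintro x ⟨h1, h2⟩
      simp only [PreHat.mul_w, Subgroup.coe_mul, S.ap_mul]
      rw [hw _ h1, hw' x h2]

/-- The monoid in which the face monoid `Ŵ` lives: the quotient of the
semidirect product by the congruence. -/
def FM := S.hatCon.Quotient

noncomputable instance : Monoid S.FM := by unfold FM; infer_instance

/-- The class of the pair `(σ, R)` in the quotient. -/
def fmk (p : S.PreHat) : S.FM := S.hatCon.mk' p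

/-- The element `σ = σ ε(X)` of the face monoid. -/
def wEl (σ : S.W) : S.FM := S.fmk ⟨σ, S.titsCone, subset_rfl⟩

/-- The idempotent `ε(R)` for `R ⊆ X`. -/
def eps (R : Set S.E) (h : R ⊆ S.titsCone) : S.FM := S.fmk ⟨1, R, h⟩

/-- The idempotent `ε(R(Θ))`. -/
def faceEl (Θ : Set S.I) : S.FM := S.eps (S.faceR Θ) (S.faceR_subset Θ)

/-- The element `σ ε(R)` of the face monoid. -/
def genEl (σ : S.W) (R : Set S.E) (h : R ⊆ S.titsCone) : S.FM := S.fmk ⟨σ, R, h⟩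

/-- The image of the Weyl group `W` in the face monoid. -/
def Wset : Set S.FM := Set.range S.wEl

/-- The set `E = {ε(R) : R ∈ Fa(X)}` of idempotents of the face monoid. -/
def Eset : Set S.FM := { x | ∃ R, ∃ h : R ∈ S.faces, x = S.eps R (S.faces_subset h) }

/-- The face monoid `Ŵ` associated to the Weyl group `W`: the submonoid
generated by `W` and the idempotents `ε(R)`, `R` a face of the Tits cone;
its elements are exactly the `σ ε(R)` with `σ ∈ W` and `R ∈ Fa(X)`. -/
noncomputable def hatW : Submonoid S.FM := Submonoid.closure (S.Wset ∪ S.Eset)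

/-- The image of the parabolic subgroup `W_J` in the face monoid. -/
def WJset (J : Set S.I) : Set S.FM :=
  { x | ∃ σ, ∃ h : σ ∈ S.WJ J, x = S.wEl ⟨σ, S.WJ_le_W J h⟩ }

/-- The set `E_J = {ε(R) : R ∈ Fa(X), R ⊇ R(J^∞)}`. -/
def EJset (J : Set S.I) : Set S.FM :=
  { x | ∃ R, ∃ h : R ∈ S.faces, S.faceR (S.infpart J) ⊆ R ∧ x = S.eps R (S.faces_subset h) }

/-- The standard parabolic submonoid `Ŵ_J = W_J ⬝ E_J` of the face monoid. -/
def hatWJ (J : Set S.I) : Set S.FM := S.WJset J * S.EJset J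

/-- The coset `σ W_J`, an element of the Coxeter complex. -/
def coset (σ : S.U) (J : Set S.I) : Set S.U := { τ | ∃ w ∈ S.WJ J, τ = σ * w }

/-- The Coxeter complex `C = {σ W_J : σ ∈ W, J ⊆ I}`, partially ordered by
reverse inclusion. -/
def Cox : Set (Set S.U) := { c | ∃ σ ∈ S.W, ∃ J : Set S.I, c = S.coset σ J }

/-- Left translation, giving the action of `W` on the Coxeter complex. -/
def lmul (σ : S.U) (c : Set S.U) : Set S.U := (fun τ => σ * τ) '' c

/-- `W_Θ↓ = {V ∈ C : V ≤ W_Θ} = {V ∈ C : V ⊇ W_Θ}`. -/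
def downW (Θ : Set S.I) : Set (Set S.U) := { V | V ∈ S.Cox ∧ S.coset 1 Θ ⊆ V }

/-- The set of cosets `W_{Θ⊥} ⬝ (W_Θ↓)`. -/
def dSet (Θ : Set S.I) : Set (Set S.U) :=
  { c | ∃ a ∈ S.WJ (S.perp Θ), ∃ V ∈ S.downW Θ, c = S.lmul a V }

end GCMRealization

/-!
Let `x = w y = σ z` with `w ∈ W_{Θ⊥}`, `y ∈ F̄_Θ` and `z ∈ F̄_J`. Then `σ⁻¹ w` maps the point `y`
of the closed chamber to its point `z`; since `C̄` is a fundamental domain for `W`, `z = y` and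
`σ⁻¹ w` lies in the parabolic subgroup `W_P`, `P = {i | y(h_i) = 0}`. Minimality of `σ` in
`W_{Θ⊥} σ` forces `σ ∈ W_P`, so `σ` fixes `x = y` and `red σ ⊆ P`. Conversely `σ` fixes every
point of `F̄_{red σ}`.

The fundamental domain property rests on the positivity of roots: `ℓ(w σ_s) > ℓ(w)` iff `w α_s`
is a nonnegative combination of simple roots. It is proved by induction on `ℓ(w)`, reducing to
the rank-two subgroups `⟨σ_s, σ_t⟩` (explicit coordinates when `a_{st} a_{ts} ≥ 4`, braid relations
otherwise), and is applied to the dual realization to bound `h_t ∘ w⁻¹` on the chamber.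
-/

namespace PointedCone

variable {ι M : Type*} [Fintype ι] [AddCommGroup M] [Module ℝ M] {v : ι → M}

lemma mem_hull_range_iff {x : M} :
    x ∈ hull ℝ (Set.range v) ↔ ∃ c : ι → ℝ, (∀ i, 0 ≤ c i) ∧ ∑ i, c i • v i = x := by
  rw [Submodule.mem_span_range_iff_exists_fun]
  exact ⟨fun ⟨c, hc⟩ => ⟨fun i => c i, fun i => (c i).2, hc⟩,
    fun ⟨c, hc, hx⟩ => ⟨fun i => ⟨c i, hc i⟩, hx⟩⟩

lemma eq_zero_of_mem_hull_of_neg_mem (hv : LinearIndependent ℝ v) {x : M}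
    (hx : x ∈ hull ℝ (Set.range v)) (hx' : -x ∈ hull ℝ (Set.range v)) :
    x = 0 := by
  obtain ⟨c, hc, rfl⟩ := mem_hull_range_iff.1 hx
  obtain ⟨d, hd, hdc⟩ := mem_hull_range_iff.1 hx'
  have hsum : ∑ i, (c i + d i) • v i = 0 := by
    simp only [add_smul, Finset.sum_add_distrib, hdc, add_neg_cancel]
  have hc0 : ∀ i, c i = 0 := fun i => by
    linarith [Fintype.linearIndependent_iff.1 hv _ hsum i, hc i, hd i]
  simp [hc0]

end PointedCone

namespace GCMRealization

variable (S : GCMRealization)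

section Words

lemma sUnit_val (i : S.I) : (S.sUnit i).val = S.sMap i := rfl

lemma sUnit_inv (i : S.I) : (S.sUnit i)⁻¹ = S.sUnit i := Units.ext rfl

lemma sUnit_mul_self (i : S.I) : S.sUnit i * S.sUnit i = 1 := Units.ext (S.sMap_sq i)

lemma mul_sUnit_mul_sUnit (u : S.U) (i : S.I) : u * S.sUnit i * S.sUnit i = u := by
  rw [mul_assoc, sUnit_mul_self, mul_one]

lemma ap_sUnit (i : S.I) (x : S.E) : S.ap (S.sUnit i) x = x - S.coroot i x • S.root i := rfl

lemma ap_sUnit_of_coroot_eq_zero {i : S.I} {x : S.E} (h : S.coroot i x = 0) :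
    S.ap (S.sUnit i) x = x := by
  rw [ap_sUnit, h, zero_smul, sub_zero]

lemma ap_sUnit_root (i : S.I) : S.ap (S.sUnit i) (S.root i) = -S.root i := by
  rw [ap_sUnit, S.pairing, S.diag]
  module

lemma ap_add (u : S.U) (x y : S.E) : S.ap u (x + y) = S.ap u x + S.ap u y := map_add u.val x y

lemma ap_smul (u : S.U) (r : ℝ) (x : S.E) : S.ap u (r • x) = r • S.ap u x := map_smul u.val r x

lemma ap_neg (u : S.U) (x : S.E) : S.ap u (-x) = -S.ap u x := map_neg u.val x

lemma ap_inv_ap (u : S.U) (x : S.E) : S.ap u⁻¹ (S.ap u x) = x := by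
  rw [← S.ap_mul, inv_mul_cancel, S.ap_one]

lemma ap_ap_inv (u : S.U) (x : S.E) : S.ap u (S.ap u⁻¹ x) = x := by
  rw [← S.ap_mul, mul_inv_cancel, S.ap_one]

lemma sUnit_mem_WJ {Q : Set S.I} {i : S.I} (hi : i ∈ Q) : S.sUnit i ∈ S.WJ Q :=
  Subgroup.subset_closure ⟨i, hi, rfl⟩

lemma sUnit_mem_W (i : S.I) : S.sUnit i ∈ S.W := Subgroup.subset_closure ⟨i, rfl⟩

lemma WJ_univ : S.WJ Set.univ = S.W := by rw [WJ, Set.image_univ]; rfl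

lemma WJ_mono {Q Q' : Set S.I} (h : Q ⊆ Q') : S.WJ Q ≤ S.WJ Q' :=
  Subgroup.closure_mono (Set.image_mono h)

lemma ap_eq_self_of_mem_WJ {Q : Set S.I} {u : S.U} (hu : u ∈ S.WJ Q) {x : S.E}
    (hx : ∀ i ∈ Q, S.coroot i x = 0) : S.ap u x = x := by
  have : S.WJ Q ≤ MulAction.stabilizer S.U x :=
    (Subgroup.closure_le _).2 fun _ ⟨i, hi, he⟩ => he ▸ S.ap_sUnit_of_coroot_eq_zero (hx i hi)
  exact this hu

lemma wordProd_nil : S.wordProd [] = 1 := rfl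

lemma wordProd_cons (i : S.I) (l : List S.I) :
    S.wordProd (i :: l) = S.sUnit i * S.wordProd l := by
  simp [wordProd]

lemma wordProd_append (l l' : List S.I) :
    S.wordProd (l ++ l') = S.wordProd l * S.wordProd l' := by
  simp [wordProd]

lemma wordProd_concat (l : List S.I) (i : S.I) :
    S.wordProd (l ++ [i]) = S.wordProd l * S.sUnit i := by
  simp [wordProd]

lemma wordProd_reverse (l : List S.I) : S.wordProd l.reverse = (S.wordProd l)⁻¹ := by
  induction l with
  | nil => simp [wordProd]
  | cons i l ih =>
    rw [List.reverse_cons, wordProd_concat, ih, wordProd_cons, mul_inv_rev, sUnit_inv]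

lemma wordProd_mem_WJ {Q : Set S.I} {l : List S.I} (h : ∀ i ∈ l, i ∈ Q) :
    S.wordProd l ∈ S.WJ Q := by
  induction l with
  | nil => exact one_mem _
  | cons i l ih =>
    rw [wordProd_cons]
    exact mul_mem (S.sUnit_mem_WJ (h i (by simp))) (ih fun j hj => h j (by simp [hj]))

lemma mem_WJ_iff {Q : Set S.I} {u : S.U} :
    u ∈ S.WJ Q ↔ ∃ l : List S.I, (∀ i ∈ l, i ∈ Q) ∧ S.wordProd l = u := by
  refine ⟨fun hu => ?_, fun ⟨l, hl, hlu⟩ => hlu ▸ S.wordProd_mem_WJ hl⟩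
  induction hu using Subgroup.closure_induction with
  | mem _ h =>
    obtain ⟨i, hi, rfl⟩ := h
    exact ⟨[i], by simpa using hi, by simp [wordProd]⟩
  | one => exact ⟨[], by simp, rfl⟩
  | mul _ _ _ _ h h' =>
    obtain ⟨l, hl, rfl⟩ := h
    obtain ⟨l', hl', rfl⟩ := h'
    exact ⟨l ++ l', by simpa using fun i hi => Or.elim hi (hl i) (hl' i),
      S.wordProd_append l l'⟩
  | inv _ _ h =>
    obtain ⟨l, hl, rfl⟩ := h
    exact ⟨l.reverse, by simpa using hl, S.wordProd_reverse l⟩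

lemma mem_W_iff {u : S.U} : u ∈ S.W ↔ ∃ l : List S.I, S.wordProd l = u := by
  simp [← WJ_univ, mem_WJ_iff]

lemma length_le_of_wordProd_eq {u : S.U} {l : List S.I} (h : S.wordProd l = u) :
    S.length u ≤ l.length :=
  Nat.sInf_le ⟨l, rfl, h⟩

lemma exists_isReduced {u : S.U} (hu : u ∈ S.W) : ∃ l, S.IsReduced l u := by
  obtain ⟨l, hl⟩ := S.mem_W_iff.1 hu
  obtain ⟨l', h1, h2⟩ := Nat.sInf_mem (⟨l.length, l, rfl, hl⟩ :
    {n | ∃ l : List S.I, l.length = n ∧ S.wordProd l = u}.Nonempty)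
  exact ⟨l', h2, h1⟩

lemma mem_WJ_red {u : S.U} (hu : u ∈ S.W) : u ∈ S.WJ (S.red u) := by
  obtain ⟨l, hl⟩ := S.exists_isReduced hu
  have h := S.wordProd_mem_WJ (Q := S.red u) fun i hi => ⟨l, hl, hi⟩
  rwa [hl.1] at h

lemma eq_one_of_length_eq_zero {u : S.U} (hu : u ∈ S.W) (h : S.length u = 0) : u = 1 := by
  obtain ⟨l, hl, hlen⟩ := S.exists_isReduced hu
  rw [h, List.length_eq_zero_iff] at hlen
  rw [← hl, hlen, wordProd_nil]

lemma length_mul_wordProd_le {u : S.U} (hu : u ∈ S.W) (l : List S.I) :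
    S.length (u * S.wordProd l) ≤ S.length u + l.length := by
  obtain ⟨lu, hlu, hlen⟩ := S.exists_isReduced hu
  have h := S.length_le_of_wordProd_eq (S.wordProd_append lu l)
  rwa [hlu, List.length_append, hlen] at h

lemma length_mul_sUnit_le {u : S.U} (hu : u ∈ S.W) (i : S.I) :
    S.length (u * S.sUnit i) ≤ S.length u + 1 := by
  simpa [wordProd] using S.length_mul_wordProd_le hu [i]

lemma length_le_length_mul_sUnit_add_one {u : S.U} (hu : u ∈ S.W) (i : S.I) :
    S.length u ≤ S.length (u * S.sUnit i) + 1 := by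
  simpa [mul_sUnit_mul_sUnit] using S.length_mul_sUnit_le (mul_mem hu (S.sUnit_mem_W i)) i

variable {S} in
lemma IsReduced.dropLast {l : List S.I} {t : S.I} {u : S.U} (h : S.IsReduced (l ++ [t]) u) :
    S.IsReduced l (u * S.sUnit t) := by
  have hprod : S.wordProd l = u * S.sUnit t := by
    rw [← h.1, wordProd_concat, mul_sUnit_mul_sUnit]
  have hu : u ∈ S.W := h.1 ▸ S.mem_W_iff.2 ⟨_, rfl⟩
  have h1 := S.length_le_length_mul_sUnit_add_one hu t
  have h2 := S.length_le_of_wordProd_eq hprod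
  have h3 := h.2
  rw [List.length_append, List.length_singleton] at h3
  exact ⟨hprod, by omega⟩

variable {S} in
lemma IsReduced.length_mul_sUnit_lt {l : List S.I} {t : S.I} {u : S.U}
    (h : S.IsReduced (l ++ [t]) u) : S.length (u * S.sUnit t) < S.length u := by
  rw [← h.2, ← h.dropLast.2]
  simp

lemma exists_length_mul_sUnit_lt {u : S.U} (hu : u ∈ S.W) (h : S.length u ≠ 0) :
    ∃ t, S.length (u * S.sUnit t) < S.length u := by
  obtain ⟨l, hl⟩ := S.exists_isReduced hu
  rcases List.eq_nil_or_concat l with rfl | ⟨l', t, rfl⟩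
  · exact absurd hl.2.symm h
  · exact ⟨t, (show S.IsReduced (l' ++ [t]) u by simpa using hl).length_mul_sUnit_lt⟩

end Words

section RankTwo

def altWord (s t : S.I) : ℕ → List S.I
  | 0 => []
  | n + 1 => altWord t s n ++ [t]

/-- `(altCoeffs a b n).1 • α_s + (altCoeffs a b n).2 • α_t` is the image of `α_s` under the
alternating word of length `n` ending in `t`, when `a_{st} = -a` and `a_{ts} = -b`. -/
def altCoeffs (a b : ℤ) : ℕ → ℤ × ℤ
  | 0 => (1, 0)
  | n + 1 =>
    let p := (altCoeffs a b n).1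
    let q := (altCoeffs a b n).2
    if n % 2 = 0 then (p, b * p - q) else (a * q - p, q)

/-- The order of `σ_s σ_t` in the finite rank-two cases `a_{st} a_{ts} ∈ {0, 1, 2, 3}`. -/
def braidOrder (n : ℤ) : ℕ := if n = 0 then 2 else if n = 1 then 3 else if n = 2 then 4 else 6

/-- The pairs `(-a_{st}, -a_{ts})` of the rank-two Cartan matrices of finite type. -/
def finiteRankTwo : List (ℤ × ℤ) := [(0, 0), (1, 1), (1, 2), (2, 1), (1, 3), (3, 1)]

lemma length_altWord (s t : S.I) (n : ℕ) : (S.altWord s t n).length = n := by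
  induction n generalizing s t with
  | zero => rfl
  | succ n ih => simp [altWord, ih]

lemma altWord_succ_eq_cons (s t : S.I) (n : ℕ) :
    S.altWord s t (n + 1) = (if n % 2 = 0 then t else s) :: S.altWord s t n := by
  induction n generalizing s t with
  | zero => rfl
  | succ n ih =>
    rw [altWord, ih t s, altWord]
    rcases Nat.mod_two_eq_zero_or_one n with h | h <;> simp [h, Nat.succ_mod_two_eq_zero_iff]

lemma exists_altWord_eq_append (s t : S.I) {m n : ℕ} (h : m ≤ n) :
    ∃ l, l.length = n - m ∧ S.altWord s t n = l ++ S.altWord s t m := by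
  induction n, h using Nat.le_induction with
  | base => exact ⟨[], by simp, rfl⟩
  | succ n hmn ih =>
    obtain ⟨l, hl, he⟩ := ih
    exact ⟨_ :: l, by simp [hl]; omega, by rw [altWord_succ_eq_cons, he, List.cons_append]⟩

lemma ap_altWord_root (s t : S.I) (n : ℕ) :
    S.ap (S.wordProd (S.altWord s t n)) (S.root s)
      = ((altCoeffs (-S.A s t) (-S.A t s) n).1 : ℝ) • S.root s
        + ((altCoeffs (-S.A s t) (-S.A t s) n).2 : ℝ) • S.root t := by
  induction n with
  | zero => simp [altWord, altCoeffs, wordProd_nil, ap_one]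
  | succ n ih =>
    rw [altWord_succ_eq_cons, wordProd_cons, ap_mul, ih, ap_sUnit]
    by_cases h : n % 2 = 0 <;>
    · simp only [h, if_true, if_false, altCoeffs, map_add, map_smul, smul_eq_mul, S.pairing,
        S.diag]
      push_cast
      module

lemma altCoeffs_nonneg_of_four_le {a b : ℤ} (ha : 0 ≤ a) (hb : 0 ≤ b) (hab : 4 ≤ a * b)
    (n : ℕ) : 0 ≤ (altCoeffs a b n).1 ∧ 0 ≤ (altCoeffs a b n).2 := by
  suffices 0 ≤ (altCoeffs a b n).1 ∧ 0 ≤ (altCoeffs a b n).2 ∧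
      (n % 2 = 0 → 2 * (altCoeffs a b n).2 ≤ b * (altCoeffs a b n).1) ∧
      (n % 2 = 1 → 2 * (altCoeffs a b n).1 ≤ a * (altCoeffs a b n).2) from ⟨this.1, this.2.1⟩
  induction n with
  | zero => simp [altCoeffs, hb]
  | succ n ih =>
    obtain ⟨h1, h2, h3, h4⟩ := ih
    rcases Nat.mod_two_eq_zero_or_one n with h | h
    · have := h3 h
      simp only [altCoeffs, h, if_true, Nat.succ_mod_two_eq_one_iff.2 h]
      exact ⟨h1, by nlinarith, by omega, fun _ => by nlinarith⟩
    · have := h4 h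
      simp only [altCoeffs, h, one_ne_zero, if_false, Nat.succ_mod_two_eq_zero_iff.2 h]
      exact ⟨by nlinarith, h2, fun _ => by nlinarith, by omega⟩

lemma mem_finiteRankTwo {a b : ℤ} (ha : 0 ≤ a) (hb : 0 ≤ b) (hab : a = 0 ↔ b = 0)
    (h : a * b < 4) : (a, b) ∈ finiteRankTwo := by
  have : a ≤ 3 := by rcases eq_or_lt_of_le hb with rfl | hb <;> [omega; nlinarith]
  have : b ≤ 3 := by rcases eq_or_lt_of_le ha with rfl | ha <;> [omega; nlinarith]
  interval_cases a <;> interval_cases b <;> simp_all [finiteRankTwo]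

lemma altCoeffs_nonneg_of_lt_braidOrder {a b : ℤ}
    (h : (a, b) ∈ finiteRankTwo) {n : ℕ}
    (hn : n < braidOrder (a * b)) : 0 ≤ (altCoeffs a b n).1 ∧ 0 ≤ (altCoeffs a b n).2 := by
  simp only [finiteRankTwo, List.mem_cons, Prod.mk.injEq, List.not_mem_nil, or_false] at h
  rcases h with ⟨rfl, rfl⟩ | ⟨rfl, rfl⟩ | ⟨rfl, rfl⟩ | ⟨rfl, rfl⟩ | ⟨rfl, rfl⟩ | ⟨rfl, rfl⟩ <;>
    revert n <;> decide

lemma wordProd_altWord_braidOrder {s t : S.I} {a b : ℤ} (hst : S.A s t = -a)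
    (hts : S.A t s = -b) (h : (a, b) ∈ finiteRankTwo) :
    S.wordProd (S.altWord s t (braidOrder (a * b)))
      = S.wordProd (S.altWord t s (braidOrder (a * b))) := by
  simp only [finiteRankTwo, List.mem_cons, Prod.mk.injEq, List.not_mem_nil, or_false] at h
  refine Units.ext (LinearMap.ext fun x => ?_)
  rcases h with ⟨rfl, rfl⟩ | ⟨rfl, rfl⟩ | ⟨rfl, rfl⟩ | ⟨rfl, rfl⟩ | ⟨rfl, rfl⟩ | ⟨rfl, rfl⟩ <;>
  · norm_num only [braidOrder]
    simp only [if_true, if_false, altWord, wordProd, List.map_append, List.map_cons,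
      List.map_nil, List.prod_append, List.prod_cons, List.prod_nil, Units.val_mul, Units.val_one,
      Module.End.one_apply, sUnit_val, Module.End.mul_apply, sMap_apply, map_sub, map_smul,
      S.pairing, S.diag, hst, hts]
    push_cast
    module

lemma rank_two_alternative {s t : S.I} (hst : s ≠ t) (n : ℕ) :
    (∃ p q : ℝ, 0 ≤ p ∧ 0 ≤ q ∧
      S.ap (S.wordProd (S.altWord s t n)) (S.root s) = p • S.root s + q • S.root t) ∨
    ∃ l : List S.I, l.length < n ∧ S.wordProd l = S.wordProd (S.altWord s t n) * S.sUnit s := by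
  have ha : 0 ≤ -S.A s t := neg_nonneg.2 (S.offDiag_nonpos s t hst)
  have hb : 0 ≤ -S.A t s := neg_nonneg.2 (S.offDiag_nonpos t s hst.symm)
  set c := altCoeffs (-S.A s t) (-S.A t s) n
  have of_coeffs (h : 0 ≤ c.1 ∧ 0 ≤ c.2) : ∃ p q : ℝ, 0 ≤ p ∧ 0 ≤ q ∧
      S.ap (S.wordProd (S.altWord s t n)) (S.root s) = p • S.root s + q • S.root t :=
    ⟨c.1, c.2, by exact_mod_cast h.1, by exact_mod_cast h.2, S.ap_altWord_root s t n⟩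
  by_cases h4 : 4 ≤ -S.A s t * -S.A t s
  · exact Or.inl (of_coeffs (altCoeffs_nonneg_of_four_le ha hb h4 n))
  have hfin := mem_finiteRankTwo ha hb (by simp [S.zero_iff]) (not_le.1 h4)
  by_cases hn : n < braidOrder (-S.A s t * -S.A t s)
  · exact Or.inl (of_coeffs (altCoeffs_nonneg_of_lt_braidOrder hfin hn))
  obtain ⟨m, hm⟩ : ∃ m, braidOrder (-S.A s t * -S.A t s) = m + 1 :=
    ⟨_, (Nat.succ_pred_eq_of_pos (by unfold braidOrder; split_ifs <;> norm_num)).symm⟩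
  obtain ⟨l, hl, he⟩ := S.exists_altWord_eq_append s t (not_lt.1 hn)
  refine Or.inr ⟨l ++ S.altWord s t m, by
    rw [hm, not_lt] at hn
    rw [List.length_append, length_altWord, hl, hm]
    omega, ?_⟩
  rw [he, wordProd_append, wordProd_append, mul_assoc,
    S.wordProd_altWord_braidOrder (neg_neg _).symm (neg_neg _).symm hfin, hm, altWord,
    wordProd_concat, mul_sUnit_mul_sUnit]

end RankTwo

section Positivity

def rootCone : PointedCone ℝ S.E := PointedCone.hull ℝ (Set.range S.root)

lemma root_mem_rootCone (i : S.I) : S.root i ∈ S.rootCone := PointedCone.subset_hull ⟨i, rfl⟩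

lemma exists_altWord_of_length_mul_sUnit_lt {w : S.U} (hw : w ∈ S.W) {s t : S.I} (hst : s ≠ t)
    (hd : S.length (w * S.sUnit t) < S.length w) :
    ∃ v ∈ S.W, ∃ n, 1 ≤ n ∧ w = v * S.wordProd (S.altWord s t n) ∧
      S.length w = S.length v + n ∧
      S.length v ≤ S.length (v * S.sUnit s) ∧ S.length v ≤ S.length (v * S.sUnit t) := by
  induction hN : S.length w using Nat.strong_induction_on generalizing w s t with
  | _ N ih =>
  have hw' : w * S.sUnit t ∈ S.W := mul_mem hw (S.sUnit_mem_W t)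
  have hlen : S.length w = S.length (w * S.sUnit t) + 1 := by
    have := S.length_le_length_mul_sUnit_add_one hw t
    omega
  by_cases hc : S.length (w * S.sUnit t * S.sUnit s) < S.length (w * S.sUnit t)
  · obtain ⟨v, hv, n, hn, he, hvlen, hvt, hvs⟩ := ih _ (by omega) hw' hst.symm hc rfl
    refine ⟨v, hv, n + 1, by omega, ?_, by omega, hvs, hvt⟩
    rw [altWord, wordProd_concat, ← mul_assoc, ← he, mul_sUnit_mul_sUnit]
  · refine ⟨w * S.sUnit t, hw', 1, le_rfl, ?_, by omega, not_lt.1 hc, ?_⟩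
    · simp [altWord, wordProd, mul_sUnit_mul_sUnit]
    · rw [mul_sUnit_mul_sUnit]
      omega

theorem ap_root_mem_rootCone {w : S.U} (hw : w ∈ S.W) {s : S.I}
    (h : S.length w ≤ S.length (w * S.sUnit s)) : S.ap w (S.root s) ∈ S.rootCone := by
  induction hN : S.length w using Nat.strong_induction_on generalizing w s with
  | _ N ih =>
  by_cases h0 : S.length w = 0
  · rw [S.eq_one_of_length_eq_zero hw h0, ap_one]
    exact S.root_mem_rootCone s
  obtain ⟨t, ht⟩ := S.exists_length_mul_sUnit_lt hw h0
  have hst : s ≠ t := by rintro rfl; omega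
  obtain ⟨v, hv, n, hn, rfl, hlen, hvs, hvt⟩ :=
    S.exists_altWord_of_length_mul_sUnit_lt hw hst ht
  rcases S.rank_two_alternative hst n with ⟨p, q, hp, hq, hpq⟩ | ⟨l, hl, hls⟩
  · rw [ap_mul, hpq, ap_add, ap_smul, ap_smul]
    exact add_mem (PointedCone.smul_mem _ hp (ih _ (by omega) hv hvs rfl))
      (PointedCone.smul_mem _ hq (ih _ (by omega) hv hvt rfl))
  · have := S.length_mul_wordProd_le hv l
    rw [mul_assoc, ← hls] at h
    omega

lemma ap_mul_sUnit_root (w : S.U) (s : S.I) :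
    S.ap (w * S.sUnit s) (S.root s) = -S.ap w (S.root s) := by
  rw [ap_mul, ap_sUnit_root, ap_neg]

lemma neg_ap_root_mem_rootCone {w : S.U} (hw : w ∈ S.W) {s : S.I}
    (h : S.length (w * S.sUnit s) < S.length w) : -S.ap w (S.root s) ∈ S.rootCone := by
  rw [← ap_mul_sUnit_root]
  exact S.ap_root_mem_rootCone (mul_mem hw (S.sUnit_mem_W s)) (by rw [mul_sUnit_mul_sUnit]; omega)

lemma length_lt_length_mul_sUnit {w : S.U} (hw : w ∈ S.W) {s : S.I}
    (h : S.ap w (S.root s) ∈ S.rootCone) : S.length w < S.length (w * S.sUnit s) := by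
  by_contra! hle
  have hneg := S.ap_root_mem_rootCone (mul_mem hw (S.sUnit_mem_W s))
    (by rwa [mul_sUnit_mul_sUnit])
  rw [ap_mul_sUnit_root] at hneg
  have h0 := PointedCone.eq_zero_of_mem_hull_of_neg_mem S.root_indep h hneg
  apply S.root_indep.ne_zero s
  rw [← S.ap_inv_ap w (S.root s), h0]
  exact map_zero _

end Positivity

section Dual

@[reducible] noncomputable def dual : GCMRealization where
  I := S.I
  E := Module.Dual ℝ S.E
  A i j := S.A j i
  diag i := S.diag i
  offDiag_nonpos i j h := S.offDiag_nonpos j i (Ne.symm h)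
  zero_iff i j := S.zero_iff j i
  root := S.coroot
  coroot i := Module.Dual.eval ℝ S.E (S.root i)
  root_indep := S.coroot_indep
  coroot_indep := S.root_indep.map' _ (Module.eval_ker ℝ S.E)
  pairing i j := S.pairing j i

noncomputable def dualHom : S.U →* S.dual.U where
  toFun u :=
    { val := LinearMap.dualMap (u⁻¹ : S.U).val
      inv := LinearMap.dualMap u.val
      val_inv := LinearMap.ext fun φ => LinearMap.ext fun x => congrArg φ (S.ap_ap_inv u x)
      inv_val := LinearMap.ext fun φ => LinearMap.ext fun x => congrArg φ (S.ap_inv_ap u x) }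
  map_one' := rfl
  map_mul' _ _ := rfl

lemma dualHom_apply (u : S.U) (f : Module.Dual ℝ S.E) (x : S.E) :
    (S.dualHom u).val f x = f (S.ap u⁻¹ x) := rfl

lemma dualHom_sUnit (i : S.I) : S.dualHom (S.sUnit i) = S.dual.sUnit i := by
  refine Units.ext (LinearMap.ext fun φ => LinearMap.ext fun x => ?_)
  rw [dualHom_apply, sUnit_inv, ap_sUnit, map_sub, map_smul, smul_eq_mul,
    mul_comm (S.coroot i x)]
  rfl

lemma dualHom_injective : Function.Injective S.dualHom := by
  intro u v h
  refine inv_injective (Units.ext (LinearMap.ext fun x => sub_eq_zero.1 ?_))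
  refine (Module.forall_dual_apply_eq_zero_iff ℝ _).1 fun φ => ?_
  have : φ (S.ap u⁻¹ x) = φ (S.ap v⁻¹ x) := congrArg (fun w : S.dual.U => w.val φ x) h
  exact (map_sub φ _ _).trans (sub_eq_zero.2 this)

lemma dualHom_wordProd (l : List S.I) : S.dualHom (S.wordProd l) = S.dual.wordProd l := by
  induction l with
  | nil => exact map_one _
  | cons i l ih => rw [wordProd_cons, map_mul, ih, dualHom_sUnit, S.dual.wordProd_cons]

lemma length_dualHom (u : S.U) : S.dual.length (S.dualHom u) = S.length u := by
  unfold length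
  congr 1
  ext n
  refine ⟨fun ⟨l, hl, hu⟩ => ⟨l, hl, S.dualHom_injective ?_⟩, fun ⟨l, hl, hu⟩ => ⟨l, hl, ?_⟩⟩
  · rw [dualHom_wordProd, hu]
  · rw [← dualHom_wordProd, hu]

lemma dualHom_mem_W {u : S.U} (hu : u ∈ S.W) : S.dualHom u ∈ S.dual.W := by
  obtain ⟨l, rfl⟩ := S.mem_W_iff.1 hu
  rw [dualHom_wordProd]
  exact S.dual.mem_W_iff.2 ⟨l, rfl⟩

lemma coroot_ap_inv_nonpos {w : S.U} (hw : w ∈ S.W) {t : S.I}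
    (h : S.length (w * S.sUnit t) < S.length w) {z : S.E} (hz : z ∈ S.chamber) :
    S.coroot t (S.ap w⁻¹ z) ≤ 0 := by
  have hlen : S.dual.length (S.dualHom w * S.dual.sUnit t) < S.dual.length (S.dualHom w) := by
    rwa [← dualHom_sUnit, ← map_mul, length_dualHom, length_dualHom]
  obtain ⟨c, hc, hsum⟩ :=
    PointedCone.mem_hull_range_iff.1 (S.dual.neg_ap_root_mem_rootCone (S.dualHom_mem_W hw) hlen)
  have hz' : (∑ i, c i • S.coroot i) z = -S.coroot t (S.ap w⁻¹ z) :=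
    congrArg (fun f : Module.Dual ℝ S.E => f z) hsum
  simp only [LinearMap.sum_apply, LinearMap.smul_apply, smul_eq_mul] at hz'
  linarith [Finset.sum_nonneg fun i (_ : i ∈ Finset.univ) => mul_nonneg (hc i) (hz i)]

end Dual

section Parabolic

theorem eq_and_mem_WJ_of_ap_eq {v : S.U} (hv : v ∈ S.W) {y z : S.E} (hy : y ∈ S.chamber)
    (hz : z ∈ S.chamber) (hvy : S.ap v y = z) : z = y ∧ v ∈ S.WJ {i | S.coroot i y = 0} := by
  induction hN : S.length v using Nat.strong_induction_on generalizing v with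
  | _ N ih =>
  by_cases h0 : S.length v = 0
  · rw [S.eq_one_of_length_eq_zero hv h0, ap_one] at hvy
    exact ⟨hvy.symm, S.eq_one_of_length_eq_zero hv h0 ▸ one_mem _⟩
  obtain ⟨t, ht⟩ := S.exists_length_mul_sUnit_lt hv h0
  have hyt : S.coroot t y = 0 := le_antisymm
    (by simpa [← hvy, ap_inv_ap] using S.coroot_ap_inv_nonpos hv ht hz) (hy t)
  obtain ⟨hzy, hmem⟩ := ih _ (by omega) (mul_mem hv (S.sUnit_mem_W t))
    (by rw [ap_mul, S.ap_sUnit_of_coroot_eq_zero hyt, hvy]) rfl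
  refine ⟨hzy, ?_⟩
  rw [← S.mul_sUnit_mul_sUnit v t]
  exact mul_mem hmem (S.sUnit_mem_WJ hyt)

lemma ap_sum_smul (u : S.U) (c : S.I → ℝ) (x : S.I → S.E) :
    S.ap u (∑ i, c i • x i) = ∑ i, c i • S.ap u (x i) := by
  simp [ap, map_sum, map_smul]

lemma exists_ap_eq_add_sum_of_mem_WJ {Q : Set S.I} {w : S.U} (hw : w ∈ S.WJ Q) (x : S.E) :
    ∃ c : S.I → ℝ, (∀ i ∉ Q, c i = 0) ∧ S.ap w x = x + ∑ i, c i • S.root i := by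
  obtain ⟨l, hl, rfl⟩ := S.mem_WJ_iff.1 hw
  induction l with
  | nil => exact ⟨0, fun _ _ => rfl, by simp [wordProd_nil, ap_one]⟩
  | cons q l ih =>
    obtain ⟨c, hc, he⟩ := ih (fun i hi => hl i (by simp [hi])) (S.wordProd_mem_WJ fun i hi =>
      hl i (by simp [hi]))
    have hq : q ∈ Q := hl q (by simp)
    rw [wordProd_cons, ap_mul, ap_sUnit]
    generalize S.coroot q (S.ap (S.wordProd l) x) = k
    refine ⟨c - Pi.single q k, fun i hi => ?_, ?_⟩
    · simp [hc i hi, show i ≠ q from fun h => hi (h ▸ hq)]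
    · simp [he, sub_smul, Finset.sum_sub_distrib, Pi.single_apply, ite_smul, add_sub_assoc]

lemma eq_single_of_sum_eq_ap_root {Q : Set S.I} {w : S.U} (hw : w ∈ S.WJ Q) {t : S.I}
    {d : S.I → ℝ} (hd : ∑ i, d i • S.root i = S.ap w (S.root t)) {i : S.I} (hi : i ∉ Q) :
    d i = (Pi.single t 1 : S.I → ℝ) i := by
  obtain ⟨c, hc, he⟩ := S.exists_ap_eq_add_sum_of_mem_WJ hw (S.root t)
  have hsum : ∑ j, (d j - c j - (Pi.single t 1 : S.I → ℝ) j) • S.root j = 0 := by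
    simp [sub_smul, Finset.sum_sub_distrib, hd, he, Pi.single_apply, ite_smul]
  have := Fintype.linearIndependent_iff.1 S.root_indep _ hsum i
  rw [hc i hi] at this
  linarith

lemma mem_of_length_mul_sUnit_lt_of_mem_WJ {Q : Set S.I} {w : S.U} (hw : w ∈ S.WJ Q)
    {t : S.I} (h : S.length (w * S.sUnit t) < S.length w) : t ∈ Q := by
  by_contra ht
  obtain ⟨d, hd, hsum⟩ :=
    PointedCone.mem_hull_range_iff.1 (S.neg_ap_root_mem_rootCone (S.WJ_le_W Q hw) h)
  have := S.eq_single_of_sum_eq_ap_root hw (t := t) (d := -d) (by simp [neg_smul, hsum]) ht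
  simp only [Pi.neg_apply, Pi.single_eq_same] at this
  linarith [hd t]

lemma mem_of_isReduced_of_mem_WJ {Q : Set S.I} {w : S.U} (hw : w ∈ S.WJ Q) {l : List S.I}
    (hl : S.IsReduced l w) {i : S.I} (hi : i ∈ l) : i ∈ Q := by
  induction l using List.reverseRecOn generalizing w with
  | nil => simp at hi
  | append_singleton l t ih =>
    have ht := S.mem_of_length_mul_sUnit_lt_of_mem_WJ hw hl.length_mul_sUnit_lt
    rcases List.mem_append.1 hi with hi | hi
    · exact ih (mul_mem hw (S.sUnit_mem_WJ ht)) hl.dropLast hi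
    · exact List.mem_singleton.1 hi ▸ ht

lemma red_subset_of_mem_WJ {Q : Set S.I} {w : S.U} (hw : w ∈ S.WJ Q) : S.red w ⊆ Q :=
  fun _ ⟨_, hl, hi⟩ => S.mem_of_isReduced_of_mem_WJ hw hl hi

lemma mem_WJ_of_length_mul_eq_add {K : Set S.I} {a b : S.U} (ha : a ∈ S.W) (hb : b ∈ S.W)
    (hab : a * b ∈ S.WJ K) (h : S.length (a * b) = S.length a + S.length b) : a ∈ S.WJ K := by
  obtain ⟨la, hla⟩ := S.exists_isReduced ha
  obtain ⟨lb, hlb⟩ := S.exists_isReduced hb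
  have hred : S.IsReduced (la ++ lb) (a * b) :=
    ⟨by rw [wordProd_append, hla.1, hlb.1], by simp [hla.2, hlb.2, h]⟩
  rw [← hla.1]
  exact S.wordProd_mem_WJ fun i hi =>
    S.mem_of_isReduced_of_mem_WJ hab hred (List.mem_append_left _ hi)

lemma length_mul_of_no_descent {P : Set S.I} {p : S.U} (hp : p ∈ S.W)
    (hnd : ∀ k ∈ P, S.length p ≤ S.length (p * S.sUnit k)) {v : S.U} (hv : v ∈ S.WJ P) :
    S.length (p * v) = S.length p + S.length v := by
  obtain ⟨l, hl⟩ := S.exists_isReduced (S.WJ_le_W P hv)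
  rw [← hl.2]
  induction l using List.reverseRecOn generalizing v with
  | nil => simp [← hl.1, wordProd_nil]
  | append_singleton l t ih =>
    have ht : t ∈ P := S.mem_of_isReduced_of_mem_WJ hv hl (by simp)
    have hv' : v * S.sUnit t ∈ S.WJ P := mul_mem hv (S.sUnit_mem_WJ ht)
    have hlen := ih hv' hl.dropLast
    obtain ⟨d, hd, hsum⟩ := PointedCone.mem_hull_range_iff.1 <|
      S.ap_root_mem_rootCone (S.WJ_le_W P hv')
        (by rw [mul_sUnit_mul_sUnit, ← hl.2, ← hl.dropLast.2]; simp)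
    have hpos : S.ap (p * (v * S.sUnit t)) (S.root t) ∈ S.rootCone := by
      rw [ap_mul, ← hsum, ap_sum_smul]
      refine Submodule.sum_mem _ fun i _ => ?_
      by_cases hi : i ∈ P
      · exact PointedCone.smul_mem _ (hd i) (S.ap_root_mem_rootCone hp (hnd i hi))
      · rw [S.eq_single_of_sum_eq_ap_root hv' hsum hi, Pi.single_eq_of_ne (by grind), zero_smul]
        exact zero_mem _
    have hlt := S.length_lt_length_mul_sUnit (mul_mem hp (S.WJ_le_W P hv')) hpos
    have hle := S.length_mul_sUnit_le (mul_mem hp (S.WJ_le_W P hv')) t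
    rw [mul_assoc, mul_sUnit_mul_sUnit] at hlt hle
    simp only [List.length_append, List.length_singleton]
    omega

lemma exists_eq_mul_of_no_descent (P : Set S.I) {σ : S.U} (hσ : σ ∈ S.W) :
    ∃ p ∈ S.W, ∃ q ∈ S.WJ P, σ = p * q ∧ ∀ k ∈ P, S.length p ≤ S.length (p * S.sUnit k) := by
  induction hN : S.length σ using Nat.strong_induction_on generalizing σ with
  | _ N ih =>
  by_cases hd : ∃ k ∈ P, S.length (σ * S.sUnit k) < S.length σ
  · obtain ⟨k, hk, hlt⟩ := hd
    obtain ⟨p, hp, q, hq, he, hnd⟩ := ih _ (by omega) (mul_mem hσ (S.sUnit_mem_W k)) rfl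
    exact ⟨p, hp, q * S.sUnit k, mul_mem hq (S.sUnit_mem_WJ hk),
      by rw [← mul_assoc, ← he, mul_sUnit_mul_sUnit], hnd⟩
  · simp only [not_exists, not_and, not_lt] at hd
    exact ⟨σ, hσ, 1, one_mem _, (mul_one σ).symm, hd⟩

/-- Write `σ = p q` with `q ∈ W_P` and `p` without descents in `P`: then `w = p (q σ⁻¹ w)` is
a reduced decomposition, so `p ∈ W_K`, and minimality of `σ` forces `p = 1`. -/
lemma mem_WJ_of_mem_minLeft {K P : Set S.I} {σ w : S.U} (hσ : σ ∈ S.minLeft K)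
    (hw : w ∈ S.WJ K) (hv : σ⁻¹ * w ∈ S.WJ P) : σ ∈ S.WJ P := by
  obtain ⟨p, hp, q, hq, rfl, hnd⟩ := S.exists_eq_mul_of_no_descent P hσ.1
  have hqv : q * ((p * q)⁻¹ * w) ∈ S.WJ P := mul_mem hq hv
  have hw' : p * (q * ((p * q)⁻¹ * w)) = w := by group
  have hpK : p ∈ S.WJ K := S.mem_WJ_of_length_mul_eq_add hp (S.WJ_le_W P hqv) (by rwa [hw'])
    (S.length_mul_of_no_descent hp hnd hqv)
  have hmin := hσ.2 p⁻¹ (inv_mem hpK)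
  rw [inv_mul_cancel_left, S.length_mul_of_no_descent hp hnd hq] at hmin
  rwa [S.eq_one_of_length_eq_zero hp (by omega), one_mul]

lemma minDouble_subset_minLeft (K J : Set S.I) : S.minDouble K J ⊆ S.minLeft K :=
  fun _ hσ => ⟨hσ.1, fun κ hκ => by simpa using hσ.2 κ hκ 1 (one_mem _)⟩

end Parabolic

lemma closedFacet_anti {K K' : Set S.I} (h : K ⊆ K') : S.closedFacet K' ⊆ S.closedFacet K :=
  fun _ hx => ⟨fun i hi => hx.1 i (h hi), fun i _ => S.closedFacet_subset_chamber K' hx i⟩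

lemma mem_closedFacet_of_mem_chamber {K : Set S.I} {x : S.E} (hx : x ∈ S.chamber)
    (hK : ∀ i ∈ K, S.coroot i x = 0) : x ∈ S.closedFacet K :=
  ⟨hK, fun i _ => hx i⟩

end GCMRealization

namespace GCMRealization

theorem face_inter_closed_facet_general (S : GCMRealization) (Θ J : Set S.I) (σ : S.U)
    (hσ : σ ∈ S.minDouble (Θ ∪ S.perp Θ) J) :
    S.faceR Θ ∩ S.ap σ '' S.closedFacet J = S.closedFacet (Θ ∪ J ∪ S.red σ) := by
  refine Set.Subset.antisymm ?_ fun x hx => ?_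
  · rintro _ ⟨⟨w, hw, y, hy, rfl⟩, z, hz, hzw⟩
    have hyC := S.closedFacet_subset_chamber Θ hy
    obtain ⟨rfl, hv⟩ := S.eq_and_mem_WJ_of_ap_eq (mul_mem (inv_mem hσ.1) (S.WJ_le_W _ hw)) hyC
      (S.closedFacet_subset_chamber J hz) (by rw [ap_mul, ← hzw, ap_inv_ap])
    have hσy : σ ∈ S.WJ {i | S.coroot i z = 0} := S.mem_WJ_of_mem_minLeft
      (S.minDouble_subset_minLeft _ _ hσ) (S.WJ_mono Set.subset_union_right hw) hv
    rw [← hzw, S.ap_eq_self_of_mem_WJ hσy fun _ h => h]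
    refine S.mem_closedFacet_of_mem_chamber hyC ?_
    rintro i ((hi | hi) | hi)
    exacts [hy.1 i hi, hz.1 i hi, S.red_subset_of_mem_WJ hσy hi]
  · have hσx : S.ap σ x = x :=
      S.ap_eq_self_of_mem_WJ (S.mem_WJ_red hσ.1) fun i hi => hx.1 i (.inr hi)
    exact ⟨⟨1, one_mem _, x, S.closedFacet_anti (by tauto_set) hx, (S.ap_one x).symm⟩,
      x, S.closedFacet_anti (by tauto_set) hx, hσx⟩

/-- For `Θ ⊆ I` special, `J ⊆ I`, and a minimal length double
coset representative `σ ∈ ^{Θ∪Θ⊥}W^J`: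
`R(Θ) ∩ σF̄_J = F̄_{Θ∪J∪red(σ)}`. -/
theorem face_inter_closed_facet (S : GCMRealization) (Θ J : Set S.I)
    (hΘ : S.special Θ) (σ : S.U)
    (hσ : σ ∈ S.minDouble (Θ ∪ S.perp Θ) J) :
    S.faceR Θ ∩ S.ap σ '' S.closedFacet J = S.closedFacet (Θ ∪ J ∪ S.red σ) :=
  face_inter_closed_facet_general S Θ J σ hσ

end GCMRealization
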